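/- arXiv:0805.0591 — 2 statements merged into one kernel-verified Lean document; each statement's English description precedes it below -/
import Mathlib

section
/- Let π₁, π₂ : ℝ³ → ℝ be continuously differentiable functions, and write w(x) = π₁(x) + i·π₂(x). Then the following are equivalent: (i) for every pair of entire functions f, g : ℂ → ℂ, the spinor field φ = (φ₁, φ₂) : ℝ³ → ℂ² defined by φ₁(x) = f(π₁(x) + i·π₂(x)) and φ₂(x) = g(π₁(x) − i·π₂(x)) satisfies the Dirac equation D³φ = 0 on all of ℝ³, i.e. i·∂₃φ₁ + ∂₂φ₂ + i·∂₁φ₂ = 0 and −∂₂φ₁ + i·∂₁φ₁ − i·∂₃φ₂ = 0 everywhere; (ii) the identities ∂₁π₁ = ∂₂π₂, ∂₂π₁ = −∂₁π₂, ∂₃π₁ = 0 and ∂₃π₂ = 0 hold everywhere on ℝ³. -/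
open Complex

/-- Partial derivative of a complex-valued function on `ℝ³` in the `j`-th
coordinate direction. -/
noncomputable def pd3 (j : Fin 3) (f : (Fin 3 → ℝ) → ℂ) (x : Fin 3 → ℝ) : ℂ :=
  fderiv ℝ f x (Pi.single j 1)

/-- Partial derivative of a real-valued function on `ℝ³` in the `j`-th
coordinate direction. -/
noncomputable def pd3R (j : Fin 3) (f : (Fin 3 → ℝ) → ℝ) (x : Fin 3 → ℝ) : ℝ :=
  fderiv ℝ f x (Pi.single j 1)

/-!
With `w = π₁ + iπ₂`, the chain rule gives
`D³(f ∘ w, g ∘ w̄) = i (f'(w) ∂₃w + g'(w̄) · conj (∂₁w + i∂₂w), f'(w) (∂₁w + i∂₂w) − g'(w̄) · conj ∂₃w)`.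
Condition (ii) says exactly `∂₃w = 0` and `∂₁w + i∂₂w = 0`, so it makes both components vanish;
conversely, taking `f = id` and `g = 0` in (i) recovers these two equations.
-/

open ComplexConjugate

theorem pd3_holomorphic_comp {f : ℂ → ℂ} {w : (Fin 3 → ℝ) → ℂ} {x : Fin 3 → ℝ}
    (hf : DifferentiableAt ℂ f (w x)) (hw : DifferentiableAt ℝ w x) (j : Fin 3) :
    pd3 j (fun y => f (w y)) x = deriv f (w x) * pd3 j w x := by
  have h : HasFDerivAt (fun y => f (w y)) (deriv f (w x) • fderiv ℝ w x) x :=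
    hf.hasDerivAt.comp_hasFDerivAt x hw.hasFDerivAt
  rw [pd3, pd3, h.fderiv]
  rfl

theorem pd3_conj (w : (Fin 3 → ℝ) → ℂ) (j : Fin 3) (x : Fin 3 → ℝ) :
    pd3 j (fun y => conj (w y)) x = conj (pd3 j w x) :=
  congrArg (· (Pi.single j 1)) (fderiv_star (f := w) (x := x) (𝕜 := ℝ))

theorem pd3_ofReal_add_mul {u v : (Fin 3 → ℝ) → ℝ} {x : Fin 3 → ℝ}
    (hu : DifferentiableAt ℝ u x) (hv : DifferentiableAt ℝ v x) (c : ℂ) (j : Fin 3) :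
    pd3 j (fun y => (u y : ℂ) + c * v y) x = pd3R j u x + c * pd3R j v x := by
  have h : HasFDerivAt (fun y => (u y : ℂ) + c * v y)
      (ofRealCLM.comp (fderiv ℝ u x) + c • ofRealCLM.comp (fderiv ℝ v x)) x :=
    (ofRealCLM.hasFDerivAt.comp x hu.hasFDerivAt).add
      ((ofRealCLM.hasFDerivAt.comp x hv.hasFDerivAt).const_mul c)
  rw [pd3, h.fderiv]
  rfl

theorem dirac_pullback_holomorphic {f g : ℂ → ℂ} {w : (Fin 3 → ℝ) → ℂ} {x : Fin 3 → ℝ}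
    (hf : DifferentiableAt ℂ f (w x)) (hg : DifferentiableAt ℂ g (conj (w x)))
    (hw : DifferentiableAt ℝ w x) :
    (I * pd3 2 (fun y => f (w y)) x + pd3 1 (fun y => g (conj (w y))) x
        + I * pd3 0 (fun y => g (conj (w y))) x
      = I * (deriv f (w x) * pd3 2 w x + deriv g (conj (w x)) * conj (pd3 0 w x + I * pd3 1 w x)))
    ∧ (-pd3 1 (fun y => f (w y)) x + I * pd3 0 (fun y => f (w y)) x
        - I * pd3 2 (fun y => g (conj (w y))) x
      = I * (deriv f (w x) * (pd3 0 w x + I * pd3 1 w x) - deriv g (conj (w x)) * conj (pd3 2 w x))) := by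
  have hw_conj : DifferentiableAt ℝ (fun y => conj (w y)) x := hw.star
  simp only [pd3_holomorphic_comp hf hw, pd3_holomorphic_comp (w := fun y => conj (w y)) hg hw_conj,
    pd3_conj, map_add, map_mul, conj_I]
  constructor
  · linear_combination (deriv g (conj (w x)) * conj (pd3 1 w x)) * I_sq
  · linear_combination -(deriv f (w x) * pd3 1 w x) * I_sq

theorem ofReal_add_I_mul_eq_zero_iff {a b : ℝ} : (a : ℂ) + I * b = 0 ↔ a = 0 ∧ b = 0 := by
  simp [Complex.ext_iff]

theorem cauchy_riemann_iff {a₀ b₀ a₁ b₁ : ℝ} :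
    (a₀ + I * b₀) + I * (a₁ + I * b₁) = 0 ↔ a₀ = b₁ ∧ a₁ = -b₀ := by
  simp only [Complex.ext_iff, add_re, add_im, mul_re, mul_im, ofReal_re, ofReal_im, I_re, I_im,
    zero_re, zero_im]
  constructor <;> rintro ⟨h, h'⟩ <;> constructor <;> linarith

/-- A `C¹` map `π = (π₁, π₂) : ℝ³ → ℝ²` pulls back every harmonic spinor
`(f(y₁+iy₂), g(y₁−iy₂))` on `ℝ²` to a harmonic spinor on `ℝ³` (kernel of the
Euclidean Dirac operator in the Pauli representation) if and only if
`∂₁π₁ = ∂₂π₂`, `∂₂π₁ = −∂₁π₂`, `∂₃π₁ = 0` and `∂₃π₂ = 0` everywhere. -/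
theorem dirac_morphism_R3_R2
    (π₁ π₂ : (Fin 3 → ℝ) → ℝ)
    (h₁ : ContDiff ℝ 1 π₁) (h₂ : ContDiff ℝ 1 π₂) :
    (∀ f g : ℂ → ℂ, Differentiable ℂ f → Differentiable ℂ g →
      ∀ x : Fin 3 → ℝ,
        (Complex.I * pd3 2 (fun y => f ((π₁ y : ℂ) + Complex.I * (π₂ y : ℂ))) x
            + pd3 1 (fun y => g ((π₁ y : ℂ) - Complex.I * (π₂ y : ℂ))) x
            + Complex.I * pd3 0 (fun y => g ((π₁ y : ℂ) - Complex.I * (π₂ y : ℂ))) x = 0)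
        ∧
        (- pd3 1 (fun y => f ((π₁ y : ℂ) + Complex.I * (π₂ y : ℂ))) x
            + Complex.I * pd3 0 (fun y => f ((π₁ y : ℂ) + Complex.I * (π₂ y : ℂ))) x
            - Complex.I * pd3 2 (fun y => g ((π₁ y : ℂ) - Complex.I * (π₂ y : ℂ))) x = 0))
    ↔
    (∀ x : Fin 3 → ℝ,
      pd3R 0 π₁ x = pd3R 1 π₂ x ∧
      pd3R 1 π₁ x = - pd3R 0 π₂ x ∧
      pd3R 2 π₁ x = 0 ∧
      pd3R 2 π₂ x = 0) := by
  have d₁ : Differentiable ℝ π₁ := h₁.differentiable one_ne_zero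
  have d₂ : Differentiable ℝ π₂ := h₂.differentiable one_ne_zero
  obtain ⟨w, hw_def⟩ : ∃ w : (Fin 3 → ℝ) → ℂ, w = fun y => (π₁ y : ℂ) + I * π₂ y := ⟨_, rfl⟩
  have hw : Differentiable ℝ w := by rw [hw_def]; fun_prop
  have hw_add (y) : (π₁ y : ℂ) + I * π₂ y = w y := by rw [hw_def]
  have hw_sub (y) : (π₁ y : ℂ) - I * π₂ y = conj (w y) := by
    rw [← hw_add, map_add, map_mul, conj_ofReal, conj_ofReal, conj_I, neg_mul, sub_eq_add_neg]
  have hcr (x) : (pd3 2 w x = 0 ∧ pd3 0 w x + I * pd3 1 w x = 0) ↔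
      (pd3R 0 π₁ x = pd3R 1 π₂ x ∧ pd3R 1 π₁ x = -pd3R 0 π₂ x ∧
        pd3R 2 π₁ x = 0 ∧ pd3R 2 π₂ x = 0) := by
    simp only [hw_def, pd3_ofReal_add_mul (d₁ x) (d₂ x), ofReal_add_I_mul_eq_zero_iff,
      cauchy_riemann_iff]
    tauto
  simp only [hw_add, hw_sub]
  constructor
  · intro h x
    obtain ⟨e₁, e₂⟩ := h (fun z => z) (fun _ => 0) differentiable_id (differentiable_const 0) x
    obtain ⟨D₁, D₂⟩ := dirac_pullback_holomorphic (f := fun z => z) (g := fun _ => 0)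
      differentiableAt_id (differentiableAt_const 0) (hw x)
    refine (hcr x).1 ⟨?_, ?_⟩
    · simpa using D₁.symm.trans e₁
    · simpa using D₂.symm.trans e₂
  · intro h f g hf hg x
    obtain ⟨hw₂, hw₀₁⟩ := (hcr x).2 (h x)
    obtain ⟨D₁, D₂⟩ := dirac_pullback_holomorphic (hf _) (hg _) (hw x)
    rw [D₁, D₂, hw₂, hw₀₁]
    simp
end

section
/- Let 1 ≤ n ≤ m, let Cl be the Clifford algebra of the quadratic form Q(v) = −‖v‖² on Euclidean space ℝᵐ, with canonical embedding ι : ℝᵐ → Cl, and let e₁, …, eₙ be the images under ι of the first n standard basis vectors. Suppose u : {1,…,n} × {1,…,n} → ℝᵐ is a family of vectors each orthogonal to the span of the first n standard basis vectors. Then in Cl one has Σ_{i,j=1}^{n} eᵢ·ι(u(i,j))·eⱼ = Σ_{i=1}^{n} ι(u(i,i)) − Σ_{1 ≤ i < j ≤ n} ι(u(i,j) − u(j,i))·eᵢ·eⱼ. -/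
open Finset

private lemma polar_wss' (m : ℕ) (a b : Fin m → ℝ) :
    QuadraticMap.polar (QuadraticMap.weightedSumSquares ℝ (fun _ : Fin m => (-1:ℝ))) a b
      = ∑ k, -(2 * (a k * b k)) := by
  simp only [QuadraticMap.polar, QuadraticMap.weightedSumSquares_apply, Pi.add_apply,
    smul_eq_mul, neg_one_mul, Finset.sum_neg_distrib]
  rw [← Finset.sum_neg_distrib, ← Finset.sum_neg_distrib, ← Finset.sum_neg_distrib,
    ← Finset.sum_sub_distrib, ← Finset.sum_sub_distrib, ← Finset.sum_neg_distrib]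
  exact Finset.sum_congr rfl fun k _ => by ring

private lemma swap_lt_sum' {A : Type*} [AddCommMonoid A] (n : ℕ) (f : Fin n → Fin n → A) :
    ∑ i : Fin n, ∑ j ∈ univ.filter (fun j => j < i), f i j
      = ∑ i : Fin n, ∑ j ∈ univ.filter (fun j => i < j), f j i := by
  simp only [Finset.sum_filter]
  rw [Finset.sum_comm]

private lemma split_sum' {A : Type*} [AddCommGroup A] (n : ℕ) (f : Fin n → Fin n → A) :
    ∑ i : Fin n, ∑ j : Fin n, f i j
      = ∑ i : Fin n, f i i
        + ∑ i : Fin n, ∑ j ∈ univ.filter (fun j => i < j), f i j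
        + ∑ i : Fin n, ∑ j ∈ univ.filter (fun j => i < j), f j i := by
  rw [← swap_lt_sum' n f]
  rw [← Finset.sum_add_distrib, ← Finset.sum_add_distrib]
  refine Finset.sum_congr rfl fun i _ => ?_
  have h1 : (univ : Finset (Fin n))
      = insert i (univ.filter (fun j => i < j) ∪ univ.filter (fun j => j < i)) := by
    ext j
    simp only [mem_univ, mem_insert, mem_union, mem_filter, true_iff, true_and]
    simp only [Fin.ext_iff, Fin.lt_def]
    omega
  conv_lhs => rw [h1]
  rw [Finset.sum_insert, Finset.sum_union]
  · abel
  · rw [Finset.disjoint_filter]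
    intro x _ hx h; exact absurd hx (not_lt_of_gt h)
  · simp

/-- In the Clifford algebra of `Q(v) = −‖v‖²` on Euclidean `ℝᵐ`, with
`e₁, …, eₙ` the images of the first `n` standard basis vectors and
`u(i,j) ∈ ℝᵐ` a family of vectors orthogonal to the span of the first `n`
standard basis vectors, one has
`Σ_{i,j} eᵢ·ι(u(i,j))·eⱼ = Σᵢ ι(u(i,i)) − Σ_{i<j} ι(u(i,j) − u(j,i))·eᵢ·eⱼ`. -/
theorem clifford_mixed_terms_identity (n m : ℕ) (hn : 1 ≤ n) (hnm : n ≤ m)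
    (u : Fin n → Fin n → (Fin m → ℝ))
    (horth : ∀ i j : Fin n, ∀ k : Fin n, u i j (Fin.castLE hnm k) = 0) :
    let Q : QuadraticForm ℝ (Fin m → ℝ) :=
      QuadraticMap.weightedSumSquares ℝ (fun _ : Fin m => (-1 : ℝ))
    let e : Fin n → CliffordAlgebra Q :=
      fun i => CliffordAlgebra.ι Q (Pi.single (Fin.castLE hnm i) 1)
    ∑ i : Fin n, ∑ j : Fin n, e i * CliffordAlgebra.ι Q (u i j) * e j
      = ∑ i : Fin n, CliffordAlgebra.ι Q (u i i)
        - ∑ i : Fin n, ∑ j ∈ Finset.univ.filter (fun j => i < j),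
            CliffordAlgebra.ι Q (u i j - u j i) * e i * e j := by
  intro Q e
  set ι := CliffordAlgebra.ι Q with hι
  -- e i * e i = -1
  have hee : ∀ i : Fin n, e i * e i = -1 := by
    intro i
    show ι _ * ι _ = -1
    rw [CliffordAlgebra.ι_sq_scalar]
    have : Q (Pi.single (Fin.castLE hnm i) (1:ℝ)) = -1 := by
      simp [Q, QuadraticMap.weightedSumSquares_apply, Pi.single_apply]
    rw [this, map_neg, map_one]
  -- anticommutation of ι(u i j) with e k
  have hanti_u : ∀ i j k : Fin n, e k * ι (u i j) = - (ι (u i j) * e k) := by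
    intro i j k
    have hpol : QuadraticMap.polar Q (Pi.single (Fin.castLE hnm k) (1:ℝ)) (u i j) = 0 := by
      rw [show Q = QuadraticMap.weightedSumSquares ℝ (fun _ : Fin m => (-1:ℝ)) from rfl,
        polar_wss']
      apply Finset.sum_eq_zero
      intro r _
      rcases eq_or_ne r (Fin.castLE hnm k) with rfl | hr
      · simp [horth i j k]
      · simp [Pi.single_apply, hr]
    have := CliffordAlgebra.ι_mul_ι_add_swap (Q := Q)
      (Pi.single (Fin.castLE hnm k) (1:ℝ)) (u i j)
    rw [hpol, map_zero] at this
    exact eq_neg_of_add_eq_zero_left this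
  -- anticommutation of e i with e j for i ≠ j
  have hanti_e : ∀ i j : Fin n, i ≠ j → e i * e j = - (e j * e i) := by
    intro i j hij
    have hpol : QuadraticMap.polar Q (Pi.single (Fin.castLE hnm i) (1:ℝ))
        (Pi.single (Fin.castLE hnm j) (1:ℝ)) = 0 := by
      rw [show Q = QuadraticMap.weightedSumSquares ℝ (fun _ : Fin m => (-1:ℝ)) from rfl,
        polar_wss']
      apply Finset.sum_eq_zero
      intro r _
      have hij' : Fin.castLE hnm i ≠ Fin.castLE hnm j := by
        simp [Fin.ext_iff, Fin.val_ne_of_ne hij]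
      rcases eq_or_ne r (Fin.castLE hnm i) with rfl | hr
      · simp [Pi.single_apply, hij'.symm]
      · simp [Pi.single_apply, hr]
    have := CliffordAlgebra.ι_mul_ι_add_swap (Q := Q)
      (Pi.single (Fin.castLE hnm i) (1:ℝ)) (Pi.single (Fin.castLE hnm j) (1:ℝ))
    rw [hpol, map_zero] at this
    exact eq_neg_of_add_eq_zero_left this
  set f : Fin n → Fin n → CliffordAlgebra Q := fun i j => ι (u i j) * e i * e j with hf
  -- LHS = -∑∑ f
  have hLHS : ∑ i : Fin n, ∑ j : Fin n, e i * ι (u i j) * e j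
      = -∑ i : Fin n, ∑ j : Fin n, f i j := by
    rw [← Finset.sum_neg_distrib]
    refine Finset.sum_congr rfl fun i _ => ?_
    rw [← Finset.sum_neg_distrib]
    refine Finset.sum_congr rfl fun j _ => ?_
    rw [hf]
    simp only [hanti_u i j i, neg_mul]
  rw [hLHS, split_sum' n f]
  -- diagonal
  have hdiag : ∀ i : Fin n, f i i = - ι (u i i) := by
    intro i
    rw [hf]
    simp only [mul_assoc, hee i, mul_neg, mul_one]
  -- the j i term for i < j
  have hswap : ∀ i j : Fin n, i < j → f j i = - (ι (u j i) * e i * e j) := by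
    intro i j hij
    simp only [hf]
    rw [mul_assoc, mul_assoc, hanti_e j i (ne_of_gt hij), mul_neg]
  have hright : ∀ i : Fin n, ∀ j ∈ univ.filter (fun j => i < j),
      ι (u i j - u j i) * e i * e j = f i j + f j i := by
    intro i j hj
    rw [Finset.mem_filter] at hj
    rw [hswap i j hj.2, map_sub, sub_mul, sub_mul, sub_eq_add_neg]
  calc -(∑ i : Fin n, f i i
        + ∑ i : Fin n, ∑ j ∈ univ.filter (fun j => i < j), f i j
        + ∑ i : Fin n, ∑ j ∈ univ.filter (fun j => i < j), f j i)
      = ∑ i : Fin n, -(f i i)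
        - ∑ i : Fin n, ∑ j ∈ univ.filter (fun j => i < j), (f i j + f j i) := by
        rw [show (∑ i : Fin n, ∑ j ∈ univ.filter (fun j => i < j), (f i j + f j i))
          = ∑ i : Fin n, ∑ j ∈ univ.filter (fun j => i < j), f i j
            + ∑ i : Fin n, ∑ j ∈ univ.filter (fun j => i < j), f j i from by
          rw [← Finset.sum_add_distrib]
          exact Finset.sum_congr rfl fun i _ => Finset.sum_add_distrib,
          Finset.sum_neg_distrib]
        abel
    _ = ∑ i : Fin n, ι (u i i)
        - ∑ i : Fin n, ∑ j ∈ univ.filter (fun j => i < j), ι (u i j - u j i) * e i * e j := by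
        congr 1
        · exact Finset.sum_congr rfl fun i _ => by rw [hdiag i, neg_neg]
        · exact Finset.sum_congr rfl fun i _ =>
            Finset.sum_congr rfl fun j hj => (hright i j hj).symm
end
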